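/- For integers n, k with 1 ≤ k ≤ n, the degenerate central factorial numbers of the second kind satisfy T_{2,λ}(n+1,k) = (k/2 - nλ)·T_{2,λ}(n,k) + T_{2,λ}(n,k-1|−1/2). -/

import Mathlib

noncomputable def T2 (lam x : ℝ) (n k : ℕ) : ℝ :=
  iteratedDeriv n (fun t : ℝ =>
    (k.factorial : ℝ)⁻¹ * (1 + lam * t) ^ (x / lam) *
      ((1 + lam * t) ^ (1 / (2 * lam)) - (1 + lam * t) ^ (-(1 / (2 * lam)))) ^ k) 0

/-!
With `A(t) = 1 + λt`, the degenerate exponential `e_λ^x(t) = A(t)^{x/λ}` satisfies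
`A · (e_λ^x)' = x · e_λ^x` and `e_λ^x · e_λ^y = e_λ^{x+y}`. Hence the generating function `F`
of `T_{2,λ}(·, k + 1 | x)` satisfies `A · F' = (x + (k + 1)/2) · F + G`, where `G` is the
generating function of `T_{2,λ}(·, k | x - 1/2)`. Differentiating this `n` times at `0`
(Leibniz' rule, `A` being affine) gives the recurrence.
-/

open Filter Topology
open scoped ContDiff Nat

section AffineLeibniz

variable {𝕜 : Type*} [NontriviallyNormedField 𝕜]

theorem iteratedDeriv_affine_succ (a b : 𝕜) (n : ℕ) (x : 𝕜) :
    iteratedDeriv (n + 2) (fun s => a + b * s) x = 0 := by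
  have hderiv : deriv (fun s => a + b * s) = fun _ => b := by
    funext s; simp
  simp [iteratedDeriv_succ', hderiv]

/-- At `n = 0` the truncated index `n - 1` is harmless, the term carrying the factor `n`. -/
theorem iteratedDeriv_affine_mul {v : 𝕜 → 𝕜} {x : 𝕜} {n : ℕ} (a b : 𝕜)
    (hv : ContDiffAt 𝕜 n v x) :
    iteratedDeriv n (fun s => (a + b * s) * v s) x
      = (a + b * x) * iteratedDeriv n v x + n * b * iteratedDeriv (n - 1) v x := by
  rw [iteratedDeriv_fun_mul (by fun_prop) hv]
  rcases n with _ | m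
  · simp
  rw [Finset.sum_range_succ', Finset.sum_range_succ']
  simp only [iteratedDeriv_affine_succ, mul_zero, Nat.reduceSubDiff, zero_mul,
    Finset.sum_const_zero, zero_add, Nat.choose_one_right, Nat.cast_add, Nat.cast_one,
    iteratedDeriv_succ', deriv_const_add', deriv_const_mul_id', iteratedDeriv_zero,
    add_tsub_cancel_right, Nat.choose_zero_right, one_mul, tsub_zero]
  ring

theorem natCast_mul_iteratedDeriv_pred_deriv (f : 𝕜 → 𝕜) (n : ℕ) (x : 𝕜) :
    (n : 𝕜) * iteratedDeriv (n - 1) (deriv f) x = n * iteratedDeriv n f x := by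
  cases n with
  | zero => simp
  | succ n => rw [Nat.add_sub_cancel, iteratedDeriv_succ']

end AffineLeibniz

noncomputable def degExp (lam x t : ℝ) : ℝ := (1 + lam * t) ^ (x / lam)

noncomputable def T2Gen (lam x : ℝ) (k : ℕ) (t : ℝ) : ℝ :=
  (k ! : ℝ)⁻¹ * degExp lam x t * (degExp lam (1 / 2) t - degExp lam (-(1 / 2)) t) ^ k

theorem T2_eq_iteratedDeriv_T2Gen (lam x : ℝ) (n k : ℕ) :
    T2 lam x n k = iteratedDeriv n (T2Gen lam x k) 0 := by
  unfold T2 T2Gen degExp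
  simp only [neg_div, div_div]

section DegExp

variable {lam t : ℝ}

theorem contDiffAt_degExp (x : ℝ) (ht : 1 + lam * t ≠ 0) {n : WithTop ℕ∞} :
    ContDiffAt ℝ n (degExp lam x) t :=
  (contDiffAt_const.add (contDiffAt_const.mul contDiffAt_id)).rpow_const_of_ne ht

theorem hasDerivAt_degExp (hlam : lam ≠ 0) (x : ℝ) (ht : 1 + lam * t ≠ 0) :
    HasDerivAt (degExp lam x) (x * degExp lam x t / (1 + lam * t)) t := by
  have hA : HasDerivAt (fun s : ℝ => 1 + lam * s) lam t := by
    simpa using ((hasDerivAt_id t).const_mul lam).const_add 1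
  refine (hA.rpow_const (p := x / lam) (Or.inl ht)).congr_deriv ?_
  rw [degExp, Real.rpow_sub_one ht]
  field_simp

theorem degExp_mul_degExp (x y : ℝ) (ht : 0 < 1 + lam * t) :
    degExp lam x t * degExp lam y t = degExp lam (x + y) t := by
  simp only [degExp, add_div, Real.rpow_add ht]

theorem contDiffAt_T2Gen (x : ℝ) (k : ℕ) (ht : 1 + lam * t ≠ 0) {n : WithTop ℕ∞} :
    ContDiffAt ℝ n (T2Gen lam x k) t :=
  (contDiffAt_const.mul (contDiffAt_degExp x ht)).mul
    (((contDiffAt_degExp _ ht).sub (contDiffAt_degExp _ ht)).pow k)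

theorem affine_mul_deriv_T2Gen (hlam : lam ≠ 0) (x : ℝ) (k : ℕ) (ht : 0 < 1 + lam * t) :
    (1 + lam * t) * deriv (T2Gen lam x (k + 1)) t
      = (x + (k + 1) / 2) * T2Gen lam x (k + 1) t + T2Gen lam (x - 1 / 2) k t := by
  have hd : HasDerivAt (T2Gen lam x (k + 1)) _ t :=
    ((hasDerivAt_degExp hlam x ht.ne').const_mul _).mul
      (((hasDerivAt_degExp hlam (1 / 2) ht.ne').sub
        (hasDerivAt_degExp hlam (-(1 / 2)) ht.ne')).pow (k + 1))
  rw [hd.deriv, T2Gen, T2Gen, sub_eq_add_neg x, ← degExp_mul_degExp x _ ht, Nat.factorial_succ,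
    Pi.sub_apply]
  push_cast
  field_simp
  ring

end DegExp

theorem T2_succ_succ {lam : ℝ} (hlam : lam ≠ 0) (x : ℝ) (n k : ℕ) :
    T2 lam x (n + 1) (k + 1)
      = (x + (k + 1) / 2 - n * lam) * T2 lam x n (k + 1) + T2 lam (x - 1 / 2) n k := by
  simp only [T2_eq_iteratedDeriv_T2Gen]
  have hpos : ∀ᶠ t in 𝓝 (0 : ℝ), 0 < 1 + lam * t :=
    continuousAt_const.eventually_lt (by fun_prop) (by simp)
  have hsmooth (y : ℝ) (j : ℕ) {m : WithTop ℕ∞} : ContDiffAt ℝ m (T2Gen lam y j) 0 :=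
    contDiffAt_T2Gen y j (by simp)
  have hode : (fun t => (1 + lam * t) * deriv (T2Gen lam x (k + 1)) t) =ᶠ[𝓝 0]
      fun t => (x + (k + 1) / 2) * T2Gen lam x (k + 1) t + T2Gen lam (x - 1 / 2) k t :=
    hpos.mono fun _ => affine_mul_deriv_T2Gen hlam x k
  have hleibniz := iteratedDeriv_affine_mul (n := n) 1 lam
    ((hsmooth x (k + 1)).derivWithin (m := n) le_rfl)
  rw [hode.iteratedDeriv_eq,
    iteratedDeriv_fun_add (contDiffAt_const.mul (hsmooth _ _)) (hsmooth _ _),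
    iteratedDeriv_const_mul_field, mul_right_comm (n : ℝ) lam,
    natCast_mul_iteratedDeriv_pred_deriv, ← iteratedDeriv_succ'] at hleibniz
  linear_combination -hleibniz

theorem T2_num_recurrence_general (lam : ℝ) (hlam : lam ≠ 0) (n k : ℕ) (hk : 1 ≤ k) :
    T2 lam 0 (n + 1) k
      = ((k : ℝ) / 2 - (n : ℝ) * lam) * T2 lam 0 n k
        + T2 lam (-(1 / 2)) n (k - 1) := by
  obtain ⟨k, rfl⟩ := Nat.exists_eq_add_of_le' hk
  simpa using T2_succ_succ hlam 0 n k

theorem T2_num_recurrence (lam : ℝ) (hlam : lam ≠ 0) (n k : ℕ) (hk : 1 ≤ k) (hkn : k ≤ n) :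
    T2 lam 0 (n + 1) k
      = ((k : ℝ) / 2 - (n : ℝ) * lam) * T2 lam 0 n k
        + T2 lam (-(1 / 2)) n (k - 1) :=
  T2_num_recurrence_general lam hlam n k hk
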